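/- arXiv:2001.00494 — 2 statements merged into one kernel-verified Lean document; each statement's English description precedes it below -/
import Mathlib

section
/- In Pic′ define the symmetry roots α₀ = H_p−E₁−E₂, α₁ = H_q−E₅−E₆, α₂ = H_p−E₃−E₄, α₃ = H_q−E₇−E₈, δ = α₀+α₁+α₂+α₃, the reflections w_i(C) = C + (C•α_i)α_i for i = 0,1,2,3, and the lattice automorphisms σ₁ = π₁ ∘ w_ρ where ρ = H_q−H_p, w_ρ(C) = C + (C•ρ)ρ, and π₁ is the basis permutation exchanging E₁↔E₇, E₂↔E₈, E₃↔E₅, E₄↔E₆ and fixing H_q, H_p; σ₂ the basis permutation exchanging E₁↔E₃, E₂↔E₄; σ₃ the basis permutation exchanging E₅↔E₇, E₆↔E₈. Then the composition T = σ₃ ∘ σ₂ ∘ w₃ ∘ w₁ ∘ w₂ ∘ w₀ acts on the symmetry roots as the translation ⟨−1,1,−1,1⟩: T(α₀) = α₀ − δ, T(α₁) = α₁ + δ, T(α₂) = α₂ − δ, T(α₃) = α₃ + δ. -/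
/-- The Picard lattice `Pic′` of the standard `D₅⁽¹⁾` Sakai surface: the free `ℤ`-module of
rank 10 with basis `H_q, H_p, E₁, …, E₈`. -/
abbrev Pic' : Type := Fin 10 → ℤ

/-- The `i`-th basis vector of `Pic′`. -/
def bv (i : Fin 10) : Pic' := fun j => if j = i then 1 else 0

/-- The class `H_q`. -/
def Hq : Pic' := bv 0

/-- The class `H_p`. -/
def Hp : Pic' := bv 1

/-- The class `E (k)` of the exceptional divisor `E_{k+1}` (so `E 0 = E₁`, …, `E 7 = E₈`). -/
def E (k : Fin 8) : Pic' := bv ⟨k.val + 2, by omega⟩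

/-- The intersection form on `Pic′`: `H_q•H_q = H_p•H_p = 0`, `H_q•H_p = 1`,
`H_q•E_j = H_p•E_j = 0`, `E_i•E_j = −δ_{ij}`. -/
def inter (v w : Pic') : ℤ :=
  v 0 * w 1 + v 1 * w 0 - ∑ k : Fin 8, v ⟨k.val + 2, by omega⟩ * w ⟨k.val + 2, by omega⟩

/-- The standard symmetry root basis of type `A₃⁽¹⁾`:
`α₀ = H_p−E₁−E₂`, `α₁ = H_q−E₅−E₆`, `α₂ = H_p−E₃−E₄`, `α₃ = H_q−E₇−E₈`. -/
def alpha : Fin 4 → Pic' :=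
  ![Hp - E 0 - E 1, Hq - E 4 - E 5, Hp - E 2 - E 3, Hq - E 6 - E 7]

/-- The null root `δ = α₀ + α₁ + α₂ + α₃`. -/
def nullRoot : Pic' := alpha 0 + alpha 1 + alpha 2 + alpha 3

/-- The reflection `C ↦ C + (C•r)r` in a class `r`. -/
def reflIn (r C : Pic') : Pic' := C + inter C r • r

/-- The reflection `w_i` in the symmetry root `α_i`. -/
def w (i : Fin 4) : Pic' → Pic' := reflIn (alpha i)

/-- The lattice map induced by a permutation `s` of the basis indices (for an involution `s`,
this sends the basis vector `e_i` to `e_{s i}`). -/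
def permMap (s : Fin 10 → Fin 10) (v : Pic') : Pic' := fun j => v (s j)

/-- The Dynkin diagram automorphism `σ₂`: the basis permutation exchanging `E₁↔E₃`, `E₂↔E₄`. -/
def sigma2 : Pic' → Pic' := permMap ![0, 1, 4, 5, 2, 3, 6, 7, 8, 9]

/-- The Dynkin diagram automorphism `σ₃`: the basis permutation exchanging `E₅↔E₇`, `E₆↔E₈`. -/
def sigma3 : Pic' → Pic' := permMap ![0, 1, 2, 3, 4, 5, 8, 9, 6, 7]

/-- The Dynkin diagram automorphism `σ₁ = π₁ ∘ w_ρ`, where `ρ = H_q − H_p` and `π₁` is the basis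
permutation exchanging `E₁↔E₇`, `E₂↔E₈`, `E₃↔E₅`, `E₄↔E₆`. -/
def sigma1 : Pic' → Pic' := fun v =>
  permMap ![0, 1, 8, 9, 6, 7, 4, 5, 2, 3] (reflIn (Hq - Hp) v)

/-!
On the root lattice spanned by `α₀, …, α₃` the intersection form is minus the affine Cartan
matrix of type `A₃⁽¹⁾`, so the reflections `w_i` preserve this lattice and act on it through that
matrix, while `σ₂` and `σ₃` merely permute the roots (`α₀ ↔ α₂`, resp. `α₁ ↔ α₃`). Hence each
`T(α_j)` is an integer combination of the roots, obtained by linearity.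
-/

lemma inter_add_left (u v x : Pic') : inter (u + v) x = inter u x + inter v x := by
  simp only [inter, Pi.add_apply, add_mul, Finset.sum_add_distrib]
  ring

lemma inter_smul_left (n : ℤ) (v x : Pic') : inter (n • v) x = n * inter v x := by
  simp only [inter, Pi.smul_apply, smul_eq_mul, mul_assoc, ← Finset.mul_sum]
  ring

lemma reflIn_add (r u v : Pic') : reflIn r (u + v) = reflIn r u + reflIn r v := by
  simp only [reflIn, inter_add_left, add_smul]
  abel

lemma reflIn_smul (r : Pic') (n : ℤ) (v : Pic') : reflIn r (n • v) = n • reflIn r v := by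
  simp only [reflIn, inter_smul_left, smul_add, mul_smul]

lemma permMap_add (s : Fin 10 → Fin 10) (u v : Pic') :
    permMap s (u + v) = permMap s u + permMap s v := rfl

lemma permMap_smul (s : Fin 10 → Fin 10) (n : ℤ) (v : Pic') :
    permMap s (n • v) = n • permMap s v := rfl

def cartanA3Affine : Matrix (Fin 4) (Fin 4) ℤ :=
  !![2, -1, 0, -1; -1, 2, -1, 0; 0, -1, 2, -1; -1, 0, -1, 2]

lemma inter_alpha_alpha (i j : Fin 4) : inter (alpha i) (alpha j) = -cartanA3Affine i j := by
  revert i j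
  decide

lemma w_alpha (i j : Fin 4) : w i (alpha j) = alpha j - cartanA3Affine j i • alpha i := by
  rw [w, reflIn, inter_alpha_alpha, neg_smul, ← sub_eq_add_neg]

lemma w_add (i : Fin 4) (u v : Pic') : w i (u + v) = w i u + w i v := reflIn_add _ _ _

lemma w_smul (i : Fin 4) (n : ℤ) (v : Pic') : w i (n • v) = n • w i v := reflIn_smul _ _ _

lemma sigma2_add (u v : Pic') : sigma2 (u + v) = sigma2 u + sigma2 v := permMap_add _ _ _

lemma sigma2_smul (n : ℤ) (v : Pic') : sigma2 (n • v) = n • sigma2 v := permMap_smul _ _ _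

lemma sigma3_add (u v : Pic') : sigma3 (u + v) = sigma3 u + sigma3 v := permMap_add _ _ _

lemma sigma3_smul (n : ℤ) (v : Pic') : sigma3 (n • v) = n • sigma3 v := permMap_smul _ _ _

lemma sigma2_alpha (j : Fin 4) : sigma2 (alpha j) = alpha (![2, 1, 0, 3] j) := by
  revert j
  decide

lemma sigma3_alpha (j : Fin 4) : sigma3 (alpha j) = alpha (![0, 3, 2, 1] j) := by
  revert j
  decide

/-- The composition `T = σ₃ ∘ σ₂ ∘ w₃ ∘ w₁ ∘ w₂ ∘ w₀` (the decomposition of the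
standard KNY discrete Painlevé equation on the `D₅⁽¹⁾` surface) acts on the symmetry roots as the
translation `⟨−1,1,−1,1⟩`. -/
theorem KNY_translation_on_symmetry_roots :
    let T : Pic' → Pic' := fun v => sigma3 (sigma2 (w 3 (w 1 (w 2 (w 0 v)))))
    T (alpha 0) = alpha 0 - nullRoot ∧ T (alpha 1) = alpha 1 + nullRoot ∧
      T (alpha 2) = alpha 2 - nullRoot ∧ T (alpha 3) = alpha 3 + nullRoot := by
  refine ⟨?_, ?_, ?_, ?_⟩ <;>
  simp only [w_alpha, w_add, w_smul, sub_eq_add_neg, ← neg_smul, sigma2_add, sigma2_smul,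
    sigma3_add, sigma3_smul, sigma2_alpha, sigma3_alpha, cartanA3Affine, Matrix.of_apply,
    Matrix.cons_val', Matrix.cons_val_zero, Matrix.cons_val_one, Matrix.cons_val,
    Matrix.cons_val_fin_one, nullRoot] <;>
  module
end

section
/- In Pic′ define the symmetry roots α₀ = H_p−E₁−E₂, α₁ = H_q−E₅−E₆, α₂ = H_p−E₃−E₄, α₃ = H_q−E₇−E₈, the reflections w_i(C) = C + (C•α_i)α_i for i = 0,1,2,3, and the lattice automorphisms σ₂, σ₃ given by the basis permutations exchanging E₁↔E₃, E₂↔E₄ (for σ₂) and E₅↔E₇, E₆↔E₈ (for σ₃). Then: (i) w₁ ∘ σ₃ ∘ σ₂ = σ₃ ∘ σ₂ ∘ w₃ as maps Pic′ → Pic′; and (ii) consequently σ₃ ∘ σ₂ ∘ w₁ ∘ w₂ ∘ w₀ ∘ w₁ = w₁ ∘ (σ₃ ∘ σ₂ ∘ w₃ ∘ w₁ ∘ w₂ ∘ w₀) ∘ w₁, i.e., the Laguerre translation word ψ is the conjugate by w₁ of the standard KNY translation word φ. -/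
/- An isometry `f` of the lattice carries the reflection in `r` to the reflection in `f r`, and
`σ₃σ₂` is an isometry sending `α₃` to `α₁`, which gives (i).
Since `α₁•α₁ = -2`, `w₁` is an involution, and (ii) follows from (i) by moving `σ₃σ₂` past `w₃`. -/

lemma inter_add_smul_left (v u r : Pic') (k : ℤ) :
    inter (v + k • u) r = inter v r + k * inter u r := by
  simp only [inter, Pi.add_apply, Pi.smul_apply, smul_eq_mul, add_mul, mul_assoc,
    Finset.sum_add_distrib, ← Finset.mul_sum]
  ring

lemma reflIn_reflIn {r : Pic'} (hr : inter r r = -2) (C : Pic') : reflIn r (reflIn r C) = C := by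
  have hC : inter (reflIn r C) r = -inter C r := by
    rw [reflIn, inter_add_smul_left, hr]
    ring
  rw [reflIn, hC, reflIn, neg_smul, add_neg_cancel_right]

lemma permMap_add_smul (s : Fin 10 → Fin 10) (v u : Pic') (k : ℤ) :
    permMap s (v + k • u) = permMap s v + k • permMap s u :=
  rfl

lemma inter_permMap {s : Fin 10 → Fin 10} (e : Equiv.Perm (Fin 8)) (h0 : s 0 = 0) (h1 : s 1 = 1)
    (hE : ∀ k : Fin 8, s (k.addNat 2) = (e k).addNat 2) (v u : Pic') :
    inter (permMap s v) (permMap s u) = inter v u := by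
  have hsum : ∑ k : Fin 8, v (s (k.addNat 2)) * u (s (k.addNat 2))
      = ∑ k : Fin 8, v (k.addNat 2) * u (k.addNat 2) := by
    simp only [hE]
    exact Equiv.sum_comp e fun k => v (k.addNat 2) * u (k.addNat 2)
  simp only [inter, permMap, h0, h1]
  exact congrArg _ hsum

lemma permMap_reflIn {s : Fin 10 → Fin 10}
    (hs : ∀ v u : Pic', inter (permMap s v) (permMap s u) = inter v u) (r C : Pic') :
    permMap s (reflIn r C) = reflIn (permMap s r) (permMap s C) := by
  rw [reflIn, permMap_add_smul, reflIn, hs]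

lemma inter_sigma2 (v u : Pic') : inter (sigma2 v) (sigma2 u) = inter v u :=
  inter_permMap (Equiv.swap 0 2 * Equiv.swap 1 3) rfl rfl (by decide) v u

lemma inter_sigma3 (v u : Pic') : inter (sigma3 v) (sigma3 u) = inter v u :=
  inter_permMap (Equiv.swap 4 6 * Equiv.swap 5 7) rfl rfl (by decide) v u

lemma sigma3_sigma2_alpha_three : sigma3 (sigma2 (alpha 3)) = alpha 1 := by
  decide

lemma inter_alpha_one_self : inter (alpha 1) (alpha 1) = -2 := by
  decide

lemma w_one_sigma3_sigma2 (C : Pic') : w 1 (sigma3 (sigma2 C)) = sigma3 (sigma2 (w 3 C)) := by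
  rw [w, w, ← sigma3_sigma2_alpha_three, sigma2, sigma3,
    permMap_reflIn inter_sigma2, permMap_reflIn inter_sigma3]

/-- (i) `w₁ ∘ σ₃ ∘ σ₂ = σ₃ ∘ σ₂ ∘ w₃` on `Pic′`, and consequently (ii) the
Laguerre translation word `ψ = σ₃σ₂w₁w₂w₀w₁` is the conjugate by `w₁` of the standard KNY
translation word `φ = σ₃σ₂w₃w₁w₂w₀`. -/
theorem laguerre_word_is_conjugate_of_KNY_word :
    (∀ C : Pic', w 1 (sigma3 (sigma2 C)) = sigma3 (sigma2 (w 3 C))) ∧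
    (∀ C : Pic',
      sigma3 (sigma2 (w 1 (w 2 (w 0 (w 1 C)))))
        = w 1 (sigma3 (sigma2 (w 3 (w 1 (w 2 (w 0 (w 1 C)))))))) :=
  ⟨w_one_sigma3_sigma2, fun C => by
    rw [← w_one_sigma3_sigma2, w, reflIn_reflIn inter_alpha_one_self]⟩
end
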